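/- For a Hessenberg index-2 DAE (ẏ = f(y,z), 0 = g(y), so ḡ_z = 0) with true solution (y,z), approximation (Y,Z), and adjoint pair (φ^{(y)}, φ^{(z)}) solving -φ̇^{(y)} = f̄_yᵀ φ^{(y)} + ḡ_yᵀ φ^{(z)} + ψ^y, 0 = f̄_zᵀ φ^{(y)} + ψ^z, with terminal condition φ^{(y)}(T) = -ḡ_yᵀ (f̄_zᵀ ḡ_yᵀ)⁻¹ ψ^z |_{t=T}, the cumulative QoI error satisfies ∫₀ᵀ (e^{(y)}, ψ^y) dt + ∫₀ᵀ (e^{(z)}, ψ^z) dt = (φ^{(y)}(0), e^{(y)}(0)) + ∫₀ᵀ (φ^{(y)}, f(Y,Z) - Ẏ) dt + ∫₀ᵀ (φ^{(z)}, g(Y)) dt - (g(Y), (f̄_zᵀ ḡ_yᵀ)⁻¹ ψ^z)|_{t=T}. -/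

import Mathlib

open Matrix MeasureTheory Set

/-! The averaged Jacobians are the matrices of the mean value theorem in integral form, so the
errors `e_y = y - Y`, `e_z = z - Z` solve the linearized DAE
`ė_y = f̄_y e_y + f̄_z e_z + (f(Y,Z) - Ẏ)`, `0 = ḡ_y e_y + g(Y)`.
Differentiating `(φ_y, e_y)` and using the adjoint equations leaves exactly the integrand of the
identity, and the fundamental theorem of calculus concludes. At `t = T` the terminal condition
turns `(φ_y, e_y)` into `(g(Y), (f̄_zᵀ ḡ_yᵀ)⁻¹ ψ_z)` via `ḡ_y e_y = -g(Y)`. -/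

/-- The averaged Jacobian matrix `∫₀¹ DF(s) (c s) ds`. -/
noncomputable def avgJac {p q : ℕ} (F : ℝ → (Fin p → ℝ) → (Fin q → ℝ))
    (c : ℝ → Fin p → ℝ) : Matrix (Fin q) (Fin p) ℝ :=
  LinearMap.toMatrix'
    ((∫ s in (0:ℝ)..1, fderiv ℝ (F s) (c s)).toLinearMap)

section Segment

variable {E F : Type*} [NormedAddCommGroup E] [NormedSpace ℝ E]
  [NormedAddCommGroup F] [NormedSpace ℝ F]

theorem hasDerivAt_smul_add_one_sub_smul (a A : E) (s : ℝ) :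
    HasDerivAt (fun s : ℝ => s • a + (1 - s) • A) (a - A) s := by
  convert ((hasDerivAt_id s).smul_const (a - A)).const_add A using 1
  · ext s; simp only [id, sub_smul, smul_sub, one_smul]; abel
  · simp

theorem integral_fderiv_segment [CompleteSpace F] {h : E → F} (hh : ContDiff ℝ 1 h) (a A : E) :
    ∫ s in (0:ℝ)..1, fderiv ℝ h (s • a + (1 - s) • A) (a - A) = h a - h A := by
  have hd := hh.differentiable one_ne_zero
  rw [intervalIntegral.integral_eq_sub_of_hasDerivAt
    (fun s _ => (hd _).hasFDerivAt.comp_hasDerivAt s (hasDerivAt_smul_add_one_sub_smul a A s))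
    (((hh.continuous_fderiv one_ne_zero).comp (by fun_prop)).clm_apply
      continuous_const |>.intervalIntegrable 0 1)]
  simp

end Segment

theorem avgJac_mulVec {p q : ℕ} {F : ℝ → (Fin p → ℝ) → (Fin q → ℝ)} {c : ℝ → Fin p → ℝ}
    (hF : Continuous fun s => fderiv ℝ (F s) (c s)) (v : Fin p → ℝ) :
    avgJac F c *ᵥ v = ∫ s in (0:ℝ)..1, fderiv ℝ (F s) (c s) v := by
  rw [avgJac, ← Matrix.toLin'_apply, Matrix.toLin'_toMatrix', ContinuousLinearMap.coe_coe,
    ContinuousLinearMap.intervalIntegral_apply (hF.intervalIntegrable 0 1)]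

theorem avgJac_segment_mulVec_sub {p q : ℕ} {g : (Fin p → ℝ) → (Fin q → ℝ)}
    (hg : ContDiff ℝ 1 g) (a A : Fin p → ℝ) :
    avgJac (fun _ y' => g y') (fun s => s • a + (1 - s) • A) *ᵥ (a - A) = g a - g A := by
  rw [avgJac_mulVec ((hg.continuous_fderiv one_ne_zero).comp (by fun_prop)),
    integral_fderiv_segment hg]

theorem avgJac_segment_mulVec_add_mulVec {n m k : ℕ}
    {f : (Fin n → ℝ) × (Fin m → ℝ) → (Fin k → ℝ)} (hf : ContDiff ℝ 1 f)
    (a A : Fin n → ℝ) (b B : Fin m → ℝ) :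
    avgJac (fun s y' => f (y', s • b + (1 - s) • B)) (fun s => s • a + (1 - s) • A) *ᵥ (a - A)
      + avgJac (fun s z' => f (s • a + (1 - s) • A, z')) (fun s => s • b + (1 - s) • B) *ᵥ (b - B)
      = f (a, b) - f (A, B) := by
  set c : ℝ → (Fin n → ℝ) × (Fin m → ℝ) := fun s => (s • a + (1 - s) • A, s • b + (1 - s) • B)
  have hd := hf.differentiable one_ne_zero
  have hDf : Continuous fun s => fderiv ℝ f (c s) :=
    (hf.continuous_fderiv one_ne_zero).comp (by fun_prop)
  have hy : ∀ s, fderiv ℝ (fun y' => f (y', (c s).2)) (c s).1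
      = (fderiv ℝ f (c s)).comp (.inl ℝ _ _) :=
    fun s => ((hd _).hasFDerivAt.comp _ (hasFDerivAt_prodMk_left _ _)).fderiv
  have hz : ∀ s, fderiv ℝ (fun z' => f ((c s).1, z')) (c s).2
      = (fderiv ℝ f (c s)).comp (.inr ℝ _ _) :=
    fun s => ((hd _).hasFDerivAt.comp _ (hasFDerivAt_prodMk_right _ _)).fderiv
  rw [avgJac_mulVec ((hDf.clm_comp continuous_const).congr fun s => (hy s).symm),
    avgJac_mulVec ((hDf.clm_comp continuous_const).congr fun s => (hz s).symm)]
  simp only [hy, hz, ContinuousLinearMap.comp_apply, ContinuousLinearMap.inl_apply,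
    ContinuousLinearMap.inr_apply]
  rw [← intervalIntegral.integral_add ((hDf.clm_apply continuous_const).intervalIntegrable 0 1)
    ((hDf.clm_apply continuous_const).intervalIntegrable 0 1),
    ← integral_fderiv_segment hf (a, b) (A, B)]
  refine intervalIntegral.integral_congr fun s _ => ?_
  rw [← map_add, Prod.mk_add_mk, add_zero, zero_add]
  rfl

theorem HasDerivAt.dotProduct {ι : Type*} [Fintype ι] {u v : ℝ → ι → ℝ} {u' v' : ι → ℝ}
    {t : ℝ} (hu : HasDerivAt u u' t) (hv : HasDerivAt v v' t) :
    HasDerivAt (fun t => u t ⬝ᵥ v t) (u' ⬝ᵥ v t + u t ⬝ᵥ v') t := by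
  simp only [_root_.dotProduct]
  rw [← Finset.sum_add_distrib]
  exact HasDerivAt.fun_sum fun i _ => (hasDerivAt_pi.mp hu i).mul (hasDerivAt_pi.mp hv i)

theorem adjoint_dotProduct_add_dotProduct_linearized_eq {ι κ R : Type*} [Fintype ι] [Fintype κ]
    [CommRing R] (Fy : Matrix ι ι R) (Fz : Matrix ι κ R) (Gy : Matrix κ ι R)
    (φ ey ψy r : ι → R) (φz ez ψz c : κ → R)
    (hFz : Fzᵀ *ᵥ φ + ψz = 0) (hGy : Gy *ᵥ ey + c = 0) :
    -(Fyᵀ *ᵥ φ + Gyᵀ *ᵥ φz + ψy) ⬝ᵥ ey + φ ⬝ᵥ (Fy *ᵥ ey + Fz *ᵥ ez + r)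
      = -(ey ⬝ᵥ ψy) - ez ⬝ᵥ ψz + φ ⬝ᵥ r + φz ⬝ᵥ c := by
  have hz : ez ⬝ᵥ (Fzᵀ *ᵥ φ) + ez ⬝ᵥ ψz = 0 := by rw [← dotProduct_add, hFz, dotProduct_zero]
  have hy : φz ⬝ᵥ (Gy *ᵥ ey) + φz ⬝ᵥ c = 0 := by rw [← dotProduct_add, hGy, dotProduct_zero]
  rw [dotProduct_transpose_mulVec] at hz
  rw [neg_dotProduct, add_dotProduct, add_dotProduct, dotProduct_comm (Fyᵀ *ᵥ φ),
    dotProduct_comm (Gyᵀ *ᵥ φz), dotProduct_comm ψy, dotProduct_transpose_mulVec,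
    dotProduct_transpose_mulVec, dotProduct_add, dotProduct_add]
  linear_combination hz - hy

theorem integral_dotProduct_error_eq_of_adjoint {ι κ : Type*} [Fintype ι] [Fintype κ]
    {T : ℝ} (hT : 0 ≤ T) {Fy : ℝ → Matrix ι ι ℝ} {Fz : ℝ → Matrix ι κ ℝ}
    {Gy : ℝ → Matrix κ ι ℝ} {ey φ ψy r : ℝ → ι → ℝ} {ez φz ψz c : ℝ → κ → ℝ}
    (hey : ∀ t ∈ Ioo 0 T, HasDerivAt ey (Fy t *ᵥ ey t + Fz t *ᵥ ez t + r t) t)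
    (hGy : ∀ t ∈ Ioo 0 T, Gy t *ᵥ ey t + c t = 0)
    (hφ : ∀ t ∈ Ioo 0 T, HasDerivAt φ (-((Fy t)ᵀ *ᵥ φ t + (Gy t)ᵀ *ᵥ φz t + ψy t)) t)
    (hFz : ∀ t ∈ Ioo 0 T, (Fz t)ᵀ *ᵥ φ t + ψz t = 0)
    (hey_cont : Continuous ey) (hez_cont : Continuous ez) (hφ_cont : Continuous φ)
    (hφz_cont : Continuous φz) (hψy_cont : Continuous ψy) (hψz_cont : Continuous ψz)
    (hr_cont : Continuous r) (hc_cont : Continuous c) :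
    (∫ t in (0:ℝ)..T, ey t ⬝ᵥ ψy t) + (∫ t in (0:ℝ)..T, ez t ⬝ᵥ ψz t)
      = φ 0 ⬝ᵥ ey 0 + (∫ t in (0:ℝ)..T, φ t ⬝ᵥ r t) + (∫ t in (0:ℝ)..T, φz t ⬝ᵥ c t)
        - φ T ⬝ᵥ ey T := by
  have h₁ := (hey_cont.dotProduct hψy_cont).intervalIntegrable (μ := volume) 0 T
  have h₂ := (hez_cont.dotProduct hψz_cont).intervalIntegrable (μ := volume) 0 T
  have h₃ := (hφ_cont.dotProduct hr_cont).intervalIntegrable (μ := volume) 0 T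
  have h₄ := (hφz_cont.dotProduct hc_cont).intervalIntegrable (μ := volume) 0 T
  have hftc := intervalIntegral.integral_eq_sub_of_hasDerivAt_of_le hT
    (f' := fun t => -(ey t ⬝ᵥ ψy t) - ez t ⬝ᵥ ψz t + φ t ⬝ᵥ r t + φz t ⬝ᵥ c t)
    (hφ_cont.dotProduct hey_cont).continuousOn
    (fun t ht => by
      simpa only [adjoint_dotProduct_add_dotProduct_linearized_eq _ _ _ _ _ _ _ _ _ _ _ (hFz t ht) (hGy t ht)]
        using (hφ t ht).dotProduct (hey t ht))
    (((h₁.neg.sub h₂).add h₃).add h₄)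
  rw [intervalIntegral.integral_add ?_ h₄, intervalIntegral.integral_add ?_ h₃,
    intervalIntegral.integral_sub ?_ h₂, intervalIntegral.integral_neg] at hftc
  · linarith
  exacts [h₁.neg, h₁.neg.sub h₂, (h₁.neg.sub h₂).add h₃]

theorem hessenberg2_cumulative_qoi_error_general {n m : ℕ} (T : ℝ) (hT : 0 < T)
    (f : (Fin n → ℝ) × (Fin m → ℝ) → (Fin n → ℝ))
    (g : (Fin n → ℝ) → (Fin m → ℝ))
    (hf : ContDiff ℝ 1 f) (hg : ContDiff ℝ 1 g)
    (y Y Y' ψy φy : ℝ → Fin n → ℝ) (z Z ψz φz : ℝ → Fin m → ℝ)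
    (fby : ℝ → Matrix (Fin n) (Fin n) ℝ) (fbz : ℝ → Matrix (Fin n) (Fin m) ℝ)
    (gby : ℝ → Matrix (Fin m) (Fin n) ℝ)
    -- the averaged Jacobians along the segment between (y,z) and (Y,Z)
    (hfby : ∀ t, fby t = avgJac (fun s y' => f (y', s • z t + (1 - s) • Z t))
      (fun s => s • y t + (1 - s) • Y t))
    (hfbz : ∀ t, fbz t = avgJac (fun s z' => f (s • y t + (1 - s) • Y t, z'))
      (fun s => s • z t + (1 - s) • Z t))
    (hgby : ∀ t, gby t = avgJac (fun _ y' => g y')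
      (fun s => s • y t + (1 - s) • Y t))
    -- the true solution of the Hessenberg index-2 DAE
    (hy : ∀ t ∈ Set.Icc (0:ℝ) T, HasDerivAt y (f (y t, z t)) t)
    (hcon : ∀ t ∈ Set.Icc (0:ℝ) T, g (y t) = 0)
    -- the approximate solution and its derivative
    (hY : ∀ t ∈ Set.Icc (0:ℝ) T, HasDerivAt Y (Y' t) t)
    -- the adjoint DAE (note ḡ_z = 0)
    (hadj1 : ∀ t ∈ Set.Ico (0:ℝ) T,
      HasDerivAt φy (-((fby t)ᵀ *ᵥ φy t + (gby t)ᵀ *ᵥ φz t + ψy t)) t)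
    (hadj2 : ∀ t ∈ Set.Ico (0:ℝ) T, (fbz t)ᵀ *ᵥ φy t + ψz t = 0)
    -- sufficient smoothness for the integrals and integration by parts
    (hyc : Continuous y) (hYc : Continuous Y) (hY'c : Continuous Y')
    (hzc : Continuous z) (hZc : Continuous Z)
    (hψyc : Continuous ψy) (hψzc : Continuous ψz)
    (hφyc : Continuous φy) (hφzc : Continuous φz)
    -- adjoint terminal condition
    (hφT : φy T = -((gby T)ᵀ *ᵥ (((fbz T)ᵀ * (gby T)ᵀ)⁻¹ *ᵥ ψz T))) :
    (∫ t in (0:ℝ)..T, (y t - Y t) ⬝ᵥ ψy t)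
      + (∫ t in (0:ℝ)..T, (z t - Z t) ⬝ᵥ ψz t)
    = φy 0 ⬝ᵥ (y 0 - Y 0)
      + (∫ t in (0:ℝ)..T, φy t ⬝ᵥ (f (Y t, Z t) - Y' t))
      + (∫ t in (0:ℝ)..T, φz t ⬝ᵥ g (Y t))
      - g (Y T) ⬝ᵥ (((fbz T)ᵀ * (gby T)ᵀ)⁻¹ *ᵥ ψz T) := by
  have hΔf : ∀ t, fby t *ᵥ (y t - Y t) + fbz t *ᵥ (z t - Z t)
      = f (y t, z t) - f (Y t, Z t) := fun t => by
    rw [hfby, hfbz]; exact avgJac_segment_mulVec_add_mulVec hf _ _ _ _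
  have hΔg : ∀ t, gby t *ᵥ (y t - Y t) = g (y t) - g (Y t) := fun t => by
    rw [hgby]; exact avgJac_segment_mulVec_sub hg _ _
  have hterm : φy T ⬝ᵥ (y T - Y T) = g (Y T) ⬝ᵥ (((fbz T)ᵀ * (gby T)ᵀ)⁻¹ *ᵥ ψz T) := by
    rw [hφT, neg_dotProduct, dotProduct_comm, dotProduct_transpose_mulVec, hΔg,
      hcon T (right_mem_Icc.mpr hT.le), zero_sub, dotProduct_neg, neg_neg, dotProduct_comm]
  have hfc := hf.continuous
  have hgc := hg.continuous
  rw [← hterm]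
  refine integral_dotProduct_error_eq_of_adjoint hT.le (ey := fun t => y t - Y t)
    (ez := fun t => z t - Z t) (r := fun t => f (Y t, Z t) - Y' t) (c := fun t => g (Y t))
    (fun t ht => ?_) (fun t ht => ?_) (fun t ht => hadj1 t (Ioo_subset_Ico_self ht))
    (fun t ht => hadj2 t (Ioo_subset_Ico_self ht)) (by fun_prop) (by fun_prop) hφyc hφzc
    hψyc hψzc (by fun_prop) (by fun_prop)
  · have he := (hy t (Ioo_subset_Icc_self ht)).sub (hY t (Ioo_subset_Icc_self ht))
    rwa [← sub_add_sub_cancel (f (y t, z t)) (f (Y t, Z t)) (Y' t), ← hΔf] at he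
  · simp [hΔg, hcon t (Ioo_subset_Icc_self ht)]

/-- Cumulative QoI error representation for a Hessenberg index-2 DAE. -/
theorem hessenberg2_cumulative_qoi_error {n m : ℕ} (T : ℝ) (hT : 0 < T)
    (f : (Fin n → ℝ) × (Fin m → ℝ) → (Fin n → ℝ))
    (g : (Fin n → ℝ) → (Fin m → ℝ))
    (hf : ContDiff ℝ 1 f) (hg : ContDiff ℝ 1 g)
    (y Y Y' ψy φy : ℝ → Fin n → ℝ) (z Z ψz φz : ℝ → Fin m → ℝ)
    (fby : ℝ → Matrix (Fin n) (Fin n) ℝ) (fbz : ℝ → Matrix (Fin n) (Fin m) ℝ)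
    (gby : ℝ → Matrix (Fin m) (Fin n) ℝ)
    -- the averaged Jacobians along the segment between (y,z) and (Y,Z)
    (hfby : ∀ t, fby t = avgJac (fun s y' => f (y', s • z t + (1 - s) • Z t))
      (fun s => s • y t + (1 - s) • Y t))
    (hfbz : ∀ t, fbz t = avgJac (fun s z' => f (s • y t + (1 - s) • Y t, z'))
      (fun s => s • z t + (1 - s) • Z t))
    (hgby : ∀ t, gby t = avgJac (fun _ y' => g y')
      (fun s => s • y t + (1 - s) • Y t))
    -- the true solution of the Hessenberg index-2 DAE
    (hy : ∀ t ∈ Set.Icc (0:ℝ) T, HasDerivAt y (f (y t, z t)) t)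
    (hcon : ∀ t ∈ Set.Icc (0:ℝ) T, g (y t) = 0)
    -- the approximate solution and its derivative
    (hY : ∀ t ∈ Set.Icc (0:ℝ) T, HasDerivAt Y (Y' t) t)
    -- the adjoint DAE (note ḡ_z = 0)
    (hadj1 : ∀ t ∈ Set.Ico (0:ℝ) T,
      HasDerivAt φy (-((fby t)ᵀ *ᵥ φy t + (gby t)ᵀ *ᵥ φz t + ψy t)) t)
    (hadj2 : ∀ t ∈ Set.Ico (0:ℝ) T, (fbz t)ᵀ *ᵥ φy t + ψz t = 0)
    -- sufficient smoothness for the integrals and integration by parts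
    (hyc : Continuous y) (hYc : Continuous Y) (hY'c : Continuous Y')
    (hzc : Continuous z) (hZc : Continuous Z)
    (hψyc : Continuous ψy) (hψzc : Continuous ψz)
    (hφyc : Continuous φy) (hφzc : Continuous φz)
    -- invertibility of f̄_zᵀ ḡ_yᵀ at the terminal time
    (hinv : IsUnit ((fbz T)ᵀ * (gby T)ᵀ))
    -- adjoint terminal condition
    (hφT : φy T = -((gby T)ᵀ *ᵥ (((fbz T)ᵀ * (gby T)ᵀ)⁻¹ *ᵥ ψz T))) :
    (∫ t in (0:ℝ)..T, (y t - Y t) ⬝ᵥ ψy t)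
      + (∫ t in (0:ℝ)..T, (z t - Z t) ⬝ᵥ ψz t)
    = φy 0 ⬝ᵥ (y 0 - Y 0)
      + (∫ t in (0:ℝ)..T, φy t ⬝ᵥ (f (Y t, Z t) - Y' t))
      + (∫ t in (0:ℝ)..T, φz t ⬝ᵥ g (Y t))
      - g (Y T) ⬝ᵥ (((fbz T)ᵀ * (gby T)ᵀ)⁻¹ *ᵥ ψz T) :=
  hessenberg2_cumulative_qoi_error_general T hT f g hf hg y Y Y' ψy φy z Z ψz φz fby fbz gby hfby
    hfbz hgby hy hcon hY hadj1 hadj2 hyc hYc hY'c hzc hZc hψyc hψzc hφyc hφzc hφT
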